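/- The group B = ⟨α, β, γ | α² central, β² central, α²β² = γ²⟩ is not bi-orderable. Specifically, setting g = αβγ^{-1}, we have g ≠ 1 and ((αγ)^{-1} g (αγ))(γ^{-1} g γ)(α^{-1} g α) g = 1, so g is a generalised torsion element. -/

import Mathlib

namespace Stmt15

open scoped commutatorElement

/-- Relators for `B = ⟨α, β, γ | α² central, β² central, α²β² = γ²⟩`,
with `α = of 0`, `β = of 1`, `γ = of 2`. -/
def Brels : Set (FreeGroup (Fin 3)) :=
  {⁅(FreeGroup.of (0 : Fin 3)) ^ 2, FreeGroup.of (1 : Fin 3)⁆,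
   ⁅(FreeGroup.of (0 : Fin 3)) ^ 2, FreeGroup.of (2 : Fin 3)⁆,
   ⁅(FreeGroup.of (1 : Fin 3)) ^ 2, FreeGroup.of (0 : Fin 3)⁆,
   ⁅(FreeGroup.of (1 : Fin 3)) ^ 2, FreeGroup.of (2 : Fin 3)⁆,
   (FreeGroup.of (0 : Fin 3)) ^ 2 * (FreeGroup.of (1 : Fin 3)) ^ 2 *
     ((FreeGroup.of (2 : Fin 3)) ^ 2)⁻¹}

/-- The group `B` (a presentation of `B₂(T²)`). -/
abbrev B := PresentedGroup Brels

/-- `ℤ₂ ∗ ℤ₂ ∗ ℤ₂`, presented on three generators each of order 2. -/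
abbrev W3 := PresentedGroup {r : FreeGroup (Fin 3) | ∃ i : Fin 3, r = (FreeGroup.of i) ^ 2}

def α : B := PresentedGroup.of (0 : Fin 3)
def β : B := PresentedGroup.of (1 : Fin 3)
def γ : B := PresentedGroup.of (2 : Fin 3)

/-- Relators are trivial in `B`. -/
lemma rel_eq_one {r : FreeGroup (Fin 3)} (hr : r ∈ Brels) :
    PresentedGroup.mk Brels r = 1 := by
  have : r ∈ Subgroup.normalClosure Brels := Subgroup.subset_normalClosure hr
  exact (QuotientGroup.eq_one_iff r).mpr this

lemma comm_α2β : α ^ 2 * β = β * α ^ 2 := by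
  have h := rel_eq_one (show ⁅(FreeGroup.of (0 : Fin 3)) ^ 2, FreeGroup.of (1 : Fin 3)⁆ ∈ Brels by
    simp [Brels])
  have h2 : ⁅α ^ 2, β⁆ = 1 := by
    simpa [commutatorElement_def, α, β, PresentedGroup.of, map_mul, map_inv, map_pow] using h
  exact (commutatorElement_eq_one_iff_commute.mp h2).eq

lemma comm_α2γ : α ^ 2 * γ = γ * α ^ 2 := by
  have h := rel_eq_one (show ⁅(FreeGroup.of (0 : Fin 3)) ^ 2, FreeGroup.of (2 : Fin 3)⁆ ∈ Brels by
    simp [Brels])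
  have h2 : ⁅α ^ 2, γ⁆ = 1 := by
    simpa [commutatorElement_def, α, γ, PresentedGroup.of, map_mul, map_inv, map_pow] using h
  exact (commutatorElement_eq_one_iff_commute.mp h2).eq

lemma comm_β2α : β ^ 2 * α = α * β ^ 2 := by
  have h := rel_eq_one (show ⁅(FreeGroup.of (1 : Fin 3)) ^ 2, FreeGroup.of (0 : Fin 3)⁆ ∈ Brels by
    simp [Brels])
  have h2 : ⁅β ^ 2, α⁆ = 1 := by
    simpa [commutatorElement_def, α, β, PresentedGroup.of, map_mul, map_inv, map_pow] using h
  exact (commutatorElement_eq_one_iff_commute.mp h2).eq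

lemma comm_β2γ : β ^ 2 * γ = γ * β ^ 2 := by
  have h := rel_eq_one (show ⁅(FreeGroup.of (1 : Fin 3)) ^ 2, FreeGroup.of (2 : Fin 3)⁆ ∈ Brels by
    simp [Brels])
  have h2 : ⁅β ^ 2, γ⁆ = 1 := by
    simpa [commutatorElement_def, β, γ, PresentedGroup.of, map_mul, map_inv, map_pow] using h
  exact (commutatorElement_eq_one_iff_commute.mp h2).eq

lemma sq_rel : α ^ 2 * β ^ 2 = γ ^ 2 := by
  have h := rel_eq_one (show (FreeGroup.of (0 : Fin 3)) ^ 2 * (FreeGroup.of (1 : Fin 3)) ^ 2 *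
      ((FreeGroup.of (2 : Fin 3)) ^ 2)⁻¹ ∈ Brels by simp [Brels])
  have h2 : α ^ 2 * β ^ 2 * (γ ^ 2)⁻¹ = 1 := by
    simpa [α, β, γ, PresentedGroup.of, map_mul, map_inv, map_pow] using h
  exact mul_inv_eq_one.mp h2

/-- The abelianization map to `(ℤ/2)³`. -/
def φ : B →* Multiplicative (ZMod 2 × ZMod 2 × ZMod 2) :=
  PresentedGroup.toGroup (f := fun i =>
    Multiplicative.ofAdd (if i = 0 then ((1, 0, 0) : ZMod 2 × ZMod 2 × ZMod 2)
      else if i = 1 then (0, 1, 0) else (0, 0, 1)))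
    (by
      intro r hr
      rcases hr with h | h | h | h | h <;> subst h <;>
        simp [commutatorElement_def, map_mul, map_inv, map_pow] <;> decide)

lemma g_ne_one : α * β * γ⁻¹ ≠ 1 := by
  intro h
  have := congrArg φ h
  rw [map_mul, map_mul, map_inv, map_one] at this
  have hα : φ α = Multiplicative.ofAdd ((1, 0, 0) : ZMod 2 × ZMod 2 × ZMod 2) :=
    PresentedGroup.toGroup.of _
  have hβ : φ β = Multiplicative.ofAdd ((0, 1, 0) : ZMod 2 × ZMod 2 × ZMod 2) :=
    PresentedGroup.toGroup.of _
  have hγ : φ γ = Multiplicative.ofAdd ((0, 0, 1) : ZMod 2 × ZMod 2 × ZMod 2) :=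
    PresentedGroup.toGroup.of _
  rw [hα, hβ, hγ] at this
  exact absurd this (by decide)

/-- `B ≅ B₂(T²)` is not bi-orderable: with `g = αβγ⁻¹` we have `g ≠ 1` and
`((αγ)⁻¹g(αγ))(γ⁻¹gγ)(α⁻¹gα)g = 1`, so `g` is a generalised torsion element,
and no strict total order on `B` invariant under left and right multiplication
exists. -/
theorem stmt_15 :
    α * β * γ⁻¹ ≠ 1 ∧
    ((α * γ)⁻¹ * (α * β * γ⁻¹) * (α * γ)) * (γ⁻¹ * (α * β * γ⁻¹) * γ) *
      (α⁻¹ * (α * β * γ⁻¹) * α) * (α * β * γ⁻¹) = 1 ∧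
    ¬ ∃ r : B → B → Prop, IsStrictTotalOrder B r ∧
        (∀ a b c : B, r a b → r (c * a) (c * b)) ∧
        (∀ a b c : B, r a b → r (a * c) (b * c)) := by
  have hne := g_ne_one
  have hprod : ((α * γ)⁻¹ * (α * β * γ⁻¹) * (α * γ)) * (γ⁻¹ * (α * β * γ⁻¹) * γ) *
      (α⁻¹ * (α * β * γ⁻¹) * α) * (α * β * γ⁻¹) = 1 := by
    have e1 : ((α * γ)⁻¹ * (α * β * γ⁻¹) * (α * γ)) * (γ⁻¹ * (α * β * γ⁻¹) * γ) *
        (α⁻¹ * (α * β * γ⁻¹) * α) * (α * β * γ⁻¹)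
        = γ⁻¹ * β * γ⁻¹ * (α ^ 2 * β ^ 2) * γ⁻¹ * (α ^ 2 * β) * γ⁻¹ := by
      group
      simp [pow_two, zpow_two, mul_assoc]
    have hcomm : Commute (β ^ 2) α := comm_β2α
    have hc : β ^ 2 * α ^ 2 = α ^ 2 * β ^ 2 := (hcomm.pow_right 2).eq
    rw [e1, sq_rel, comm_α2β]
    calc γ⁻¹ * β * γ⁻¹ * γ ^ 2 * γ⁻¹ * (β * α ^ 2) * γ⁻¹
        = γ⁻¹ * (β ^ 2 * α ^ 2) * γ⁻¹ := by
          group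
          simp [pow_two, zpow_two, mul_assoc]
      _ = γ⁻¹ * (α ^ 2 * β ^ 2) * γ⁻¹ := by rw [hc]
      _ = γ⁻¹ * γ ^ 2 * γ⁻¹ := by rw [sq_rel]
      _ = 1 := by group
  refine ⟨hne, hprod, ?_⟩
  rintro ⟨r, hsto, hl, hr⟩
  haveI := hsto
  have irrefl := hsto.toIsStrictOrder.toIrrefl
  -- conjugates of a positive element are positive, etc.
  have conj : ∀ s : B → B → Prop, (∀ a b c : B, s a b → s (c * a) (c * b)) →
      (∀ a b c : B, s a b → s (a * c) (b * c)) →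
      ∀ g c : B, s 1 g → s 1 (c⁻¹ * g * c) := by
    intro s sl sr g c h
    have h1 := sl 1 g c⁻¹ h
    have h2 := sr (c⁻¹ * 1) (c⁻¹ * g) c h1
    simpa using h2
  have pos_mul : ∀ s : B → B → Prop, IsTrans B s →
      (∀ a b c : B, s a b → s (a * c) (b * c)) →
      ∀ a b : B, s 1 a → s 1 b → s 1 (a * b) := by
    intro s st sr a b ha hb
    have := sr 1 a b ha
    rw [one_mul] at this
    exact st.trans _ _ _ hb this
  rcases trichotomous_of r 1 (α * β * γ⁻¹) with h | h | h
  · -- g positive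
    set g := α * β * γ⁻¹
    have p1 : r 1 ((α * γ)⁻¹ * g * (α * γ)) := conj r hl hr g (α * γ) h
    have p2 : r 1 (γ⁻¹ * g * γ) := conj r hl hr g γ h
    have p3 : r 1 (α⁻¹ * g * α) := conj r hl hr g α h
    have := pos_mul r hsto.toIsTrans hr _ _
      (pos_mul r hsto.toIsTrans hr _ _
        (pos_mul r hsto.toIsTrans hr _ _ p1 p2) p3) h
    rw [hprod] at this
    exact irrefl.irrefl 1 this
  · exact hne h.symm
  · -- g negative: use the reversed order
    set g := α * β * γ⁻¹
    set s : B → B → Prop := fun a b => r b a with hs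
    have sl : ∀ a b c : B, s a b → s (c * a) (c * b) := fun a b c hab => hl b a c hab
    have sr' : ∀ a b c : B, s a b → s (a * c) (b * c) := fun a b c hab => hr b a c hab
    have st : IsTrans B s := ⟨fun a b c hab hbc => hsto.toIsTrans.trans c b a hbc hab⟩
    have h' : s 1 g := h
    have p1 : s 1 ((α * γ)⁻¹ * g * (α * γ)) := conj s sl sr' g (α * γ) h'
    have p2 : s 1 (γ⁻¹ * g * γ) := conj s sl sr' g γ h'
    have p3 : s 1 (α⁻¹ * g * α) := conj s sl sr' g α h'
    have := pos_mul s st sr' _ _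
      (pos_mul s st sr' _ _
        (pos_mul s st sr' _ _ p1 p2) p3) h'
    rw [hprod] at this
    exact irrefl.irrefl 1 this

end Stmt15
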